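/- Let M ⊆ (X → Bool) be a nonempty set of assignments over a finite variable set X, let Y ⊆ X, and let M₀ ⊆ (Y → Bool) be a nonempty set such that for every β ∈ M₀ and every γ : (X \ Y) → Bool with β ∪ γ ∈ M, replacing β by any β' ∈ M₀ yields β' ∪ γ ∈ M (i.e., M is 'rectangular' over M₀). Fix α ∈ M whose restriction to Y lies in M₀, and let I be the set of α' ∈ M whose restriction to Y equals the restriction of α to Y. Then |I| · |M₀| ≤ |M|. -/

import Mathlib

/-!
Agreeing with `α` on `Y`, a model `α'` is determined by its values outside `Y`; gluing those
values to any `β ∈ M₀` gives, by rectangularity, another model of `M`. The gluing map on pairs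
`(α', β)` is injective, so it embeds the product of the fiber of `α` with `M₀` into `M`.
-/

namespace Assignment

variable {ι R : Type*} [DecidableEq ι] {Y : Finset ι}

/-- The paper's `β ∪ γ`. -/
def glue (Y : Finset ι) (β : {v // v ∈ Y} → R) (γ : {v // v ∉ Y} → R) : ι → R :=
  fun i => if h : i ∈ Y then β ⟨i, h⟩ else γ ⟨i, h⟩

@[simp]
lemma glue_apply_mem (β : {v // v ∈ Y} → R) (γ : {v // v ∉ Y} → R) (v : {v // v ∈ Y}) :
    glue Y β γ v = β v := by
  simp [glue, v.2]

@[simp]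
lemma glue_apply_not_mem (β : {v // v ∈ Y} → R) (γ : {v // v ∉ Y} → R) (v : {v // v ∉ Y}) :
    glue Y β γ v = γ v := by
  simp [glue, v.2]

lemma glue_restrict (α : ι → R) : glue Y (fun v => α v) (fun v => α v) = α := by
  funext i
  by_cases h : i ∈ Y <;> simp [glue, h]

lemma glue_inj {β₁ β₂ : {v // v ∈ Y} → R} {γ₁ γ₂ : {v // v ∉ Y} → R}
    (h : glue Y β₁ γ₁ = glue Y β₂ γ₂) : β₁ = β₂ ∧ γ₁ = γ₂ := by
  constructor <;> funext v <;> simpa using congrFun h v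

def IsRectangularOver (Y : Finset ι) (M : Finset (ι → R)) (M₀ : Finset ({v // v ∈ Y} → R)) :
    Prop :=
  ∀ β ∈ M₀, ∀ γ : {v // v ∉ Y} → R, glue Y β γ ∈ M → ∀ β' ∈ M₀, glue Y β' γ ∈ M

theorem card_filter_agree_mul_card_le [DecidableEq R] {M : Finset (ι → R)}
    {M₀ : Finset ({v // v ∈ Y} → R)} (hrect : IsRectangularOver Y M M₀) {α : ι → R}
    (hαY : (fun v : {v // v ∈ Y} => α v) ∈ M₀) :
    (M.filter (fun α' => ∀ v : {v // v ∈ Y}, α' v = α v)).card * M₀.card ≤ M.card := by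
  rw [← Finset.card_product]
  refine Finset.card_le_card_of_injOn (fun p => glue Y p.2 (fun v => p.1 v)) ?_ ?_
  · rintro ⟨α', β'⟩ hp
    simp only [Finset.coe_product, Set.mem_prod, Finset.mem_coe, Finset.mem_filter] at hp
    obtain ⟨⟨hα'M, hα'Y⟩, hβ'⟩ := hp
    have hα'_glue : glue Y (fun v => α v) (fun v => α' v) = α' := by
      rw [← funext hα'Y, glue_restrict]
    exact hrect _ hαY _ (hα'_glue.symm ▸ hα'M) β' hβ'
  · rintro ⟨α₁, β₁⟩ hp ⟨α₂, β₂⟩ hq heq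
    simp only [Finset.coe_product, Set.mem_prod, Finset.mem_coe, Finset.mem_filter] at hp hq
    obtain ⟨hβ, hγ⟩ := glue_inj heq
    suffices α₁ = α₂ from Prod.ext this hβ
    rw [← glue_restrict α₁, ← glue_restrict α₂, hγ]
    congr 1
    funext v
    rw [hp.1.2 v, hq.1.2 v]

end Assignment

theorem stmt_1_general {ι : Type*} [DecidableEq ι] (Y : Finset ι)
    (M : Finset (ι → Bool)) (M₀ : Finset ({v // v ∈ Y} → Bool))
    (hrect : ∀ β ∈ M₀, ∀ γ : {v // v ∉ Y} → Bool,
      (fun i => if h : i ∈ Y then β ⟨i, h⟩ else γ ⟨i, h⟩) ∈ M →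
      ∀ β' ∈ M₀, (fun i => if h : i ∈ Y then β' ⟨i, h⟩ else γ ⟨i, h⟩) ∈ M)
    (α : ι → Bool) (hαY : (fun v : {v // v ∈ Y} => α v) ∈ M₀) :
    (M.filter (fun α' => ∀ v : {v // v ∈ Y}, α' v = α v)).card * M₀.card ≤ M.card :=
  Assignment.card_filter_agree_mul_card_le hrect hαY

/-- If M is rectangular over M₀ on the variables Y, then the number of models of M
agreeing with a fixed α ∈ M on Y, times |M₀|, is at most |M|. -/
theorem stmt_1 {ι : Type*} [Fintype ι] [DecidableEq ι] (Y : Finset ι)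
    (M : Finset (ι → Bool)) (M₀ : Finset ({v // v ∈ Y} → Bool))
    (hM : M.Nonempty) (hM₀ : M₀.Nonempty)
    (hrect : ∀ β ∈ M₀, ∀ γ : {v // v ∉ Y} → Bool,
      (fun i => if h : i ∈ Y then β ⟨i, h⟩ else γ ⟨i, h⟩) ∈ M →
      ∀ β' ∈ M₀, (fun i => if h : i ∈ Y then β' ⟨i, h⟩ else γ ⟨i, h⟩) ∈ M)
    (α : ι → Bool) (hα : α ∈ M) (hαY : (fun v : {v // v ∈ Y} => α v) ∈ M₀) :
    (M.filter (fun α' => ∀ v : {v // v ∈ Y}, α' v = α v)).card * M₀.card ≤ M.card :=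
  stmt_1_general Y M M₀ hrect α hαY
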